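/- Let n ≥ 1, 1 ≤ i ≤ n, k ≥ 0, and let P be a k-Rvalid vector of size n with exactly i nonempty entries. Then the number of elements of succ(P) having exactly i nonempty entries equals i^i. -/

import Mathlib

/-!
Let `r` be the largest element of `P`. Entry `q` of `P ∪ (P·g)↑` is `P q` together with the
entries `P p`, `g p = q`, shifted by `r`. So its nonempty entries are those of `P` and their
images under `g`, and there are still `i` of them exactly when `g` maps the support of `P` into
itself. Since the entries of `P` are disjoint subsets of `{1, …, r}`, a shifted element `x + r`
with `x ∈ P p` lies in entry `g p` and nowhere else; hence the successor determines `g` on the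
support, and depends on nothing else. Successors with `i` nonempty entries therefore correspond
to the `i ^ i` self-maps of the support.
-/

open Finset

/-- `Π·h`: the vector whose `q`-th entry is the union of the `Π p` over all `p` with `h p = q`. -/
def dotAct {n : ℕ} (Pi : Fin n → Finset ℕ) (h : Fin n → Fin n) : Fin n → Finset ℕ :=
  fun q => (Finset.univ.filter (fun p => h p = q)).biUnion Pi

/-- Entrywise union of two vectors of sets. -/
def vUnion {n : ℕ} (Pi Pi' : Fin n → Finset ℕ) : Fin n → Finset ℕ :=
  fun q => Pi q ∪ Pi' q

/-- `r = max (π₀ ∪ … ∪ π_{n−1})`. -/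
def vMax {n : ℕ} (Pi : Fin n → Finset ℕ) : ℕ :=
  (Finset.univ.sup Pi).sup id

/-- `Π↑`: add `r = max (π₀ ∪ … ∪ π_{n−1})` to every element of every entry. -/
def vUp {n : ℕ} (Pi : Fin n → Finset ℕ) : Fin n → Finset ℕ :=
  fun q => (Pi q).image (· + vMax Pi)

/-- A `k`-EXPcomposition of size `n`: pairwise disjoint entries whose union is `{1,…,2^k}`. -/
def IsEXP {n : ℕ} (k : ℕ) (Pi : Fin n → Finset ℕ) : Prop :=
  (∀ p q : Fin n, p ≠ q → Disjoint (Pi p) (Pi q)) ∧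
    Finset.univ.sup Pi = Finset.Icc 1 (2 ^ k)

/-- A `k`-Rvalid vector of size `n`. -/
def IsRvalid {n : ℕ} (k : ℕ) (ρ : Fin n → Finset ℕ) : Prop :=
  IsEXP k ρ ∧ (∀ p : Fin n, p.val = 0 → 1 ∈ ρ p) ∧
    ∀ k' < k, ∀ i ∈ Finset.Icc 1 (2 ^ k'), ∀ j ∈ Finset.Icc 1 (2 ^ k'),
      (∃ α, i ∈ ρ α ∧ j ∈ ρ α) → ∃ β, i + 2 ^ k' ∈ ρ β ∧ j + 2 ^ k' ∈ ρ β

/-- A `k`-Lvalid vector of size `m`. -/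
def IsLvalid {m : ℕ} (k : ℕ) (lam : Fin m → Finset ℕ) : Prop :=
  IsEXP k lam ∧ (∀ p : Fin m, p.val = 0 → 2 ^ k ∈ lam p) ∧
    ∀ k' < k, ∀ i ∈ Finset.Icc 1 (2 ^ k'), ∀ j ∈ Finset.Icc 1 (2 ^ k'),
      (∃ α, 2 ^ k + 1 - i ∈ lam α ∧ 2 ^ k + 1 - j ∈ lam α) →
        ∃ β, 2 ^ k + 1 - (i + 2 ^ k') ∈ lam β ∧ 2 ^ k + 1 - (j + 2 ^ k') ∈ lam β

/-- Number of nonempty entries of a vector of sets. -/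
def nne {n : ℕ} (Pi : Fin n → Finset ℕ) : ℕ :=
  (Finset.univ.filter (fun q => Pi q ≠ ∅)).card

/-- `succ(P) = {P ∪ (P·g)↑ : g}`. -/
def succSet {n : ℕ} (P : Fin n → Finset ℕ) : Finset (Fin n → Finset ℕ) :=
  (Finset.univ : Finset (Fin n → Fin n)).image (fun g => vUnion P (vUp (dotAct P g)))

/-- The graded set `U_{m,n}^{(k)}` of U-pairs. -/
def Uset (m n : ℕ) : ℕ → Set ((Fin m → Finset ℕ) × (Fin n → Finset ℕ))
  | 0 => {x | x = (fun p => if p.val = 0 then {1} else ∅,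
                   fun q => if q.val = 0 then {1} else ∅)}
  | k + 1 => {x | ∃ L P, (L, P) ∈ Uset m n k ∧ ∃ (f : Fin m → Fin m) (g : Fin n → Fin n),
      x = (vUnion (dotAct L f) (vUp L), vUnion P (vUp (dotAct P g)))}

/-- The `r`-Stirling number: partitions of `{1,…,a}` into `b` nonempty blocks
with `1,…,r` in pairwise distinct blocks. -/
noncomputable def rStirling (a b r : ℕ) : ℕ :=
  Set.ncard {C : Finset (Finset ℕ) |
    C.card = b ∧ (∅ ∉ C) ∧
    (∀ B ∈ C, ∀ B' ∈ C, B ≠ B' → Disjoint B B') ∧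
    C.sup id = Finset.Icc 1 a ∧
    ∀ x ∈ Finset.Icc 1 r, ∀ y ∈ Finset.Icc 1 r, x ≠ y →
      ∀ B ∈ C, x ∈ B → y ∉ B}

/-- The Stirling number of the second kind: the number of partitions of an
`a`-element set into `b` nonempty blocks. -/
noncomputable def stirling2 (a b : ℕ) : ℕ := rStirling a b 0

/-- The entry `s_n^{(i,j)}` (with `1 ≤ i,j ≤ n`). -/
noncomputable def sEntry (n i j : ℕ) : ℕ :=
  if i ≤ j then
    (j - i).factorial * Nat.choose (n - i) (j - i) *
      ∑ α ∈ Finset.Icc (j - i) i, Nat.choose i α * i ^ (i - α) * stirling2 α (j - i)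
  else 0

/-- The matrix `S_n`, with rows and columns indexed by `{1,…,n}`. -/
noncomputable def Smat (n : ℕ) : Matrix (Fin n) (Fin n) ℕ :=
  fun i j => sEntry n (i.val + 1) (j.val + 1)

/-- One step of the shuffle-automaton action on subsets of the grid. -/
def stepE {m n : ℕ} (E : Finset (Fin m × Fin n)) (f : Fin m → Fin m) (g : Fin n → Fin n) :
    Finset (Fin m × Fin n) :=
  E.image (fun p => (f p.1, p.2)) ∪ E.image (fun p => (p.1, g p.2))

/-- Reachability from `{(0,0)}` by finitely many steps. -/
def Reach {m n : ℕ} (hm : 0 < m) (hn : 0 < n) (E : Finset (Fin m × Fin n)) : Prop :=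
  Relation.ReflTransGen (fun E1 E2 => ∃ f g, E2 = stepE E1 f g)
    {(⟨0, hm⟩, ⟨0, hn⟩)} E

/-- Reachability from `{(0,0)}` in at most `t` steps. -/
def ReachIn {m n : ℕ} (hm : 0 < m) (hn : 0 < n) :
    ℕ → Finset (Fin m × Fin n) → Prop
  | 0, E => E = {(⟨0, hm⟩, ⟨0, hn⟩)}
  | t + 1, E => ReachIn hm hn t E ∨
      ∃ E' f g, ReachIn hm hn t E' ∧ E = stepE E' f g

/-- `s(Λ,P) = {(i,j) : λ_i ∩ ρ_j ≠ ∅}`. -/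
def sTab {m n : ℕ} (L : Fin m → Finset ℕ) (P : Fin n → Finset ℕ) :
    Finset (Fin m × Fin n) :=
  Finset.univ.filter (fun p => (L p.1 ∩ P p.2).Nonempty)

open Function

section ExtendById

variable {α : Type*} [DecidableEq α] {S : Finset α}

def extendById (S : Finset α) (φ : S → S) (a : α) : α :=
  if h : a ∈ S then φ ⟨a, h⟩ else a

theorem extendById_of_mem (φ : S → S) {a : α} (h : a ∈ S) : extendById S φ a = φ ⟨a, h⟩ :=
  dif_pos h

theorem extendById_mem (φ : S → S) {a : α} (h : a ∈ S) : extendById S φ a ∈ S := by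
  rw [extendById_of_mem φ h]
  exact (φ _).2

theorem extendById_injective {φ ψ : S → S}
    (h : ∀ a ∈ S, extendById S φ a = extendById S ψ a) : φ = ψ :=
  funext fun a => Subtype.ext <| by
    simpa only [extendById_of_mem _ a.2] using h a a.2

end ExtendById

section Successors

variable {n : ℕ} (P : Fin n → Finset ℕ)

def succMap (g : Fin n → Fin n) : Fin n → Finset ℕ :=
  vUnion P (vUp (dotAct P g))

def vSupport : Finset (Fin n) :=
  univ.filter (fun q => P q ≠ ∅)

theorem nne_eq_card_vSupport (Q : Fin n → Finset ℕ) : nne Q = (vSupport Q).card := rfl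

theorem succSet_eq_image_succMap : succSet P = univ.image (succMap P) := rfl

theorem mem_dotAct {g : Fin n → Fin n} {q : Fin n} {x : ℕ} :
    x ∈ dotAct P g q ↔ ∃ p, g p = q ∧ x ∈ P p := by
  simp [dotAct]

theorem vMax_dotAct (g : Fin n → Fin n) : vMax (dotAct P g) = vMax P := by
  have : univ.sup (dotAct P g) = univ.sup P := by
    ext x
    simp only [mem_sup, mem_univ, true_and, mem_dotAct]
    exact ⟨fun ⟨_, p, _, hx⟩ => ⟨p, hx⟩, fun ⟨p, hx⟩ => ⟨g p, p, rfl, hx⟩⟩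
  rw [vMax, vMax, this]

theorem le_vMax {p : Fin n} {x : ℕ} (hx : x ∈ P p) : x ≤ vMax P :=
  le_sup (f := id) (mem_sup.2 ⟨p, mem_univ p, hx⟩)

theorem mem_succMap {g : Fin n → Fin n} {q : Fin n} {x : ℕ} :
    x ∈ succMap P g q ↔ x ∈ P q ∨ ∃ p, g p = q ∧ ∃ y ∈ P p, y + vMax P = x := by
  simp only [succMap, vUnion, vUp, vMax_dotAct, mem_union, mem_image, mem_dotAct]
  exact or_congr_right
    ⟨fun ⟨y, ⟨p, hp, hy⟩, hx⟩ => ⟨p, hp, y, hy, hx⟩, fun ⟨p, hp, y, hy, hx⟩ => ⟨y, ⟨p, hp, hy⟩, hx⟩⟩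

theorem vSupport_succMap (g : Fin n → Fin n) :
    vSupport (succMap P g) = vSupport P ∪ (vSupport P).image g := by
  ext q
  simp only [vSupport, mem_union, mem_image, mem_filter, mem_univ, true_and,
    ← nonempty_iff_ne_empty, Finset.Nonempty, mem_succMap]
  constructor
  · rintro ⟨x, hx | ⟨p, rfl, y, hy, -⟩⟩
    exacts [Or.inl ⟨x, hx⟩, Or.inr ⟨p, ⟨y, hy⟩, rfl⟩]
  · rintro (⟨x, hx⟩ | ⟨p, ⟨y, hy⟩, rfl⟩)
    exacts [⟨x, Or.inl hx⟩, ⟨y + vMax P, Or.inr ⟨p, rfl, y, hy, rfl⟩⟩]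

theorem nne_succMap_eq_iff (g : Fin n → Fin n) :
    nne (succMap P g) = nne P ↔ ∀ p ∈ vSupport P, g p ∈ vSupport P := by
  rw [nne_eq_card_vSupport, nne_eq_card_vSupport, vSupport_succMap, ← image_subset_iff,
    ← union_eq_left]
  exact ⟨eq_of_superset_of_card_ge subset_union_left ∘ le_of_eq, congrArg card⟩

theorem succMap_congr {g g' : Fin n → Fin n} (h : ∀ p ∈ vSupport P, g p = g' p) :
    succMap P g = succMap P g' := by
  funext q
  ext x
  simp only [mem_succMap]
  refine or_congr_right (exists_congr fun p => and_congr_left fun ⟨y, hy, _⟩ => ?_)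
  rw [h p (mem_filter.2 ⟨mem_univ p, ne_empty_of_mem hy⟩)]

theorem add_vMax_mem_succMap_iff (hdisj : Pairwise (Disjoint on P))
    (hpos : ∀ p, ∀ x ∈ P p, 0 < x) {g : Fin n → Fin n} {p q : Fin n} {x : ℕ} (hx : x ∈ P p) :
    x + vMax P ∈ succMap P g q ↔ g p = q := by
  rw [mem_succMap]
  constructor
  · rintro (hq | ⟨p', rfl, y, hy, hyx⟩)
    · have := le_vMax P hq
      have := hpos p x hx
      omega
    · obtain rfl : y = x := by omega
      by_contra hne
      exact disjoint_left.1 (hdisj fun h => hne (congrArg g h)) hx hy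
  · rintro rfl
    exact Or.inr ⟨p, rfl, x, hx, rfl⟩

theorem succMap_eq_succMap_iff (hdisj : Pairwise (Disjoint on P))
    (hpos : ∀ p, ∀ x ∈ P p, 0 < x) {g g' : Fin n → Fin n} :
    succMap P g = succMap P g' ↔ ∀ p ∈ vSupport P, g p = g' p := by
  constructor
  · intro h p hp
    obtain ⟨x, hx⟩ := nonempty_iff_ne_empty.2 (mem_filter.1 hp).2
    have hmem : x + vMax P ∈ succMap P g' (g p) :=
      h ▸ (add_vMax_mem_succMap_iff P hdisj hpos hx).2 rfl
    exact ((add_vMax_mem_succMap_iff P hdisj hpos hx).1 hmem).symm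
  · exact succMap_congr P

theorem filter_succSet_nne_eq_image :
    (succSet P).filter (fun Q => nne Q = nne P) =
      univ.image (fun φ : vSupport P → vSupport P => succMap P (extendById (vSupport P) φ)) := by
  ext Q
  simp only [succSet_eq_image_succMap, mem_filter, mem_image, mem_univ, true_and]
  constructor
  · rintro ⟨⟨g, rfl⟩, hg⟩
    have hmaps := (nne_succMap_eq_iff P g).1 hg
    exact ⟨fun p => ⟨g p, hmaps p p.2⟩, succMap_congr P fun p hp => extendById_of_mem _ hp⟩
  · rintro ⟨φ, rfl⟩
    exact ⟨⟨_, rfl⟩, (nne_succMap_eq_iff P _).2 fun p hp => extendById_mem φ hp⟩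

theorem card_filter_succSet_nne (hdisj : Pairwise (Disjoint on P))
    (hpos : ∀ p, ∀ x ∈ P p, 0 < x) :
    ((succSet P).filter (fun Q => nne Q = nne P)).card = nne P ^ nne P := by
  rw [filter_succSet_nne_eq_image, card_image_of_injective, card_univ, Fintype.card_fun,
    Fintype.card_coe, nne_eq_card_vSupport]
  exact fun φ ψ h => extendById_injective ((succMap_eq_succMap_iff P hdisj hpos).1 h)

end Successors

theorem IsEXP.pairwise_disjoint {n k : ℕ} {P : Fin n → Finset ℕ} (hP : IsEXP k P) :
    Pairwise (Disjoint on P) :=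
  hP.1

theorem IsEXP.pos_of_mem {n k : ℕ} {P : Fin n → Finset ℕ} (hP : IsEXP k P) (p : Fin n) :
    ∀ x ∈ P p, 0 < x := fun _ hx =>
  (mem_Icc.1 (hP.2 ▸ mem_sup.2 ⟨p, mem_univ p, hx⟩)).1

theorem stmt8_general (n k i : ℕ)
    (P : Fin n → Finset ℕ) (hP : IsRvalid k P) (hc : nne P = i) :
    ((succSet P).filter (fun Q => nne Q = i)).card = i ^ i := by
  subst hc
  exact card_filter_succSet_nne P hP.1.pairwise_disjoint hP.1.pos_of_mem

theorem stmt8 (n k i : ℕ) (hn : 1 ≤ n) (hi1 : 1 ≤ i) (hin : i ≤ n)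
    (P : Fin n → Finset ℕ) (hP : IsRvalid k P) (hc : nne P = i) :
    ((succSet P).filter (fun Q => nne Q = i)).card = i ^ i :=
  stmt8_general n k i P hP hc
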